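/- Let $V$ be a vertex algebra. A linear map $f_z : V \otimes V \to V((z))$ gives a first order deformation $a\,{}_z^t\, b = a\,{}_z\, b + t f_z(a,b)$ of $V$ (i.e. all vertex algebra axioms hold modulo $t^2$ with unchanged vacuum $\mathbf{1}$ and translation $D$) if and only if $f \in Z^2(V,V)$. -/

import Mathlib

/- Coefficient-wise formalization of vertex algebras:
a series `w ∈ V((z))` is encoded by its coefficient function `ℤ → V`
(the value at `n` being the coefficient of `z^n`), and a field/product
`a ⊗ b ↦ a_z b ∈ V((z))` by a map `V → V → ℤ → V`. -/

namespace VertexCohomology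

open scoped BigOperators

section Defs

variable (𝕜 : Type*) [Field 𝕜] [CharZero 𝕜]
variable {V W M : Type*} [AddCommGroup V] [Module 𝕜 V] [AddCommGroup M] [Module 𝕜 M]

/-- Coefficient of `z^n` in `e^{z d} w(z)`, where `w` is a series with coefficients `w n`. -/
noncomputable def ezd (d : M →ₗ[𝕜] M) (w : ℤ → M) : ℤ → M :=
  fun n => ∑ᶠ k : ℕ, ((k.factorial : 𝕜)⁻¹) • (d ^ k) (w (n - (k : ℤ)))

/-- Coefficient of `z^n` in `w(-z)`. -/
def negz (w : ℤ → M) : ℤ → M := fun n => ((n.negOnePow : ℤ)) • w n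

/-- Coefficient of `z^n` in `(d/dz) w(z)`. -/
def derivz (w : ℤ → M) : ℤ → M := fun n => (n + 1) • w (n + 1)

/-- The constant series with value `a`. -/
def unitSeries (a : M) : ℤ → M := fun n => if n = 0 then a else 0

/-- Coefficient of `z^m w^n` in `(z+w)^l · F(z,w)`, where `F m n` is the coefficient
of `z^m w^n` of a formal series in two variables. -/
def mulZW (l : ℕ) (F : ℤ → ℤ → M) : ℤ → ℤ → M :=
  fun m n => ∑ k ∈ Finset.range (l + 1), (l.choose k : ℤ) • F (m - ((l - k : ℕ) : ℤ)) (n - (k : ℤ))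

/-- Coefficient of `x^m y^n` in `(x-y)^l · F(x,y)`. -/
def mulZmW (l : ℕ) (F : ℤ → ℤ → M) : ℤ → ℤ → M :=
  fun m n => ∑ k ∈ Finset.range (l + 1),
    ((-1 : ℤ) ^ k * (l.choose k : ℤ)) • F (m - ((l - k : ℕ) : ℤ)) (n - (k : ℤ))

/-- Coefficient of `z^m w^n` in `F(a, ·)_{z+w}` applied to the series `u` in the
variable `w`; here `(z+w)^j` is expanded in nonnegative powers of `w`:
`(z+w)^j = ∑_{i ≥ 0} C(j,i) z^{j-i} w^i`. -/
noncomputable def shiftComp (F : V → W → ℤ → M) (a : V) (u : ℤ → W) : ℤ → ℤ → M :=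
  fun m n => ∑ᶠ i : ℕ, (Ring.choose (m + (i : ℤ)) i) • F a (u (n - (i : ℤ))) (m + (i : ℤ))

/-- The axioms of a vertex algebra, stated coefficient-wise:
`Y a b n` is the coefficient of `z^n` in `a_z b`. -/
structure IsVertexAlg (Y : V → V → ℤ → V) (one : V) (D : V →ₗ[𝕜] V) : Prop where
  linear_left : ∀ (b : V) (n : ℤ), IsLinearMap 𝕜 (fun a => Y a b n)
  linear_right : ∀ (a : V) (n : ℤ), IsLinearMap 𝕜 (fun b => Y a b n)
  trunc : ∀ a b, ∃ N : ℤ, ∀ n < N, Y a b n = 0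
  unit_left : ∀ a, Y one a = unitSeries a
  unit_right : ∀ a, Y a one = ezd 𝕜 D (unitSeries a)
  transl : ∀ a b, Y (D a) b = derivz (Y a b)
  derivation : ∀ a b n, D (Y a b n) = Y (D a) b n + Y a (D b) n
  comm : ∀ a b, Y a b = ezd 𝕜 D (negz (Y b a))
  assoc : ∀ a b c, ∃ l : ℕ,
    mulZW l (fun m n => Y (Y a b m) c n) = mulZW l (shiftComp Y a (Y b c))

/-- The axioms of a module over a vertex algebra, stated coefficient-wise. -/
structure IsVModule (Y : V → V → ℤ → V) (one : V) (D : V →ₗ[𝕜] V)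
    (YM : V → M → ℤ → M) (d : M →ₗ[𝕜] M) : Prop where
  linear_left : ∀ (u : M) (n : ℤ), IsLinearMap 𝕜 (fun a => YM a u n)
  linear_right : ∀ (a : V) (n : ℤ), IsLinearMap 𝕜 (fun u => YM a u n)
  trunc : ∀ a u, ∃ N : ℤ, ∀ n < N, YM a u n = 0
  unit : ∀ u, YM one u = unitSeries u
  transl : ∀ a u, YM (D a) u = derivz (YM a u)
  derivation : ∀ a u n, d (YM a u n) = YM (D a) u n + YM a (d u) n
  assoc : ∀ a b u, ∃ l : ℕ,
    mulZW l (fun m n => YM (Y a b m) u n) = mulZW l (shiftComp YM a (YM b u))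

/-- The right action `u_z a := e^{z d}(a_{-z} u)` of `V` on `M`. -/
noncomputable def rAct (YM : V → M → ℤ → M) (d : M →ₗ[𝕜] M) (u : M) (a : V) : ℤ → M :=
  ezd 𝕜 d (negz (YM a u))

/-- `(δ₁ g)_z (a,b) = a_z g(b) - g(a_z b) + g(a)_z b`. -/
noncomputable def delta1 (Y : V → V → ℤ → V) (YM : V → M → ℤ → M) (d : M →ₗ[𝕜] M)
    (g : V → M) (a b : V) : ℤ → M :=
  fun n => YM a (g b) n - g (Y a b n) + rAct 𝕜 YM d (g a) b n

/-- Membership in `C²(V,M)`. -/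
structure IsC2 (one : V) (D : V →ₗ[𝕜] V) (d : M →ₗ[𝕜] M) (f : V → V → ℤ → M) : Prop where
  linear_left : ∀ (b : V) (n : ℤ), IsLinearMap 𝕜 (fun a => f a b n)
  linear_right : ∀ (a : V) (n : ℤ), IsLinearMap 𝕜 (fun b => f a b n)
  trunc : ∀ a b, ∃ N : ℤ, ∀ n < N, f a b n = 0
  unit_right : ∀ a, f a one = 0
  unit_left : ∀ b, f one b = 0
  transl : ∀ a b, derivz (f a b) = f (D a) b
  derivation : ∀ a b n, d (f a b n) = f (D a) b n + f a (D b) n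
  symm : ∀ a b, f a b = ezd 𝕜 d (negz (f b a))

/-- The 2-cocycle condition: for all `a,b,c` there is `N` with
`(x+z)^N [f_z(a_x b, c) + f_x(a,b)_z c] = (x+z)^N [a_{x+z} f_z(b,c) + f_{x+z}(a, b_z c)]`,
coefficients taken at `x^m z^n`, `(x+z)^j` expanded in nonnegative powers of `z`. -/
def Cocycle (Y : V → V → ℤ → V) (YM : V → M → ℤ → M) (d : M →ₗ[𝕜] M)
    (f : V → V → ℤ → M) : Prop :=
  ∀ a b c : V, ∃ N : ℕ,
    mulZW N (fun m n => f (Y a b m) c n + rAct 𝕜 YM d (f a b m) c n)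
      = mulZW N (fun m n => shiftComp YM a (f b c) m n + shiftComp f a (Y b c) m n)

/-- The square-zero extension product on `V ⊕ M`:
`(a,u)_z (b,v) = (a_z b, a_z v + u_z b + ψ_z(a,b))`. -/
noncomputable def extY (Y : V → V → ℤ → V) (YM : V → M → ℤ → M) (d : M →ₗ[𝕜] M)
    (ψ : V → V → ℤ → M) : V × M → V × M → ℤ → V × M :=
  fun p q n => (Y p.1 q.1 n, YM p.1 q.2 n + rAct 𝕜 YM d p.2 q.1 n + ψ p.1 q.1 n)

/-- The first-order deformed product on `V[t]/(t²) ≃ V × V` (first component the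
constant term, second the coefficient of `t`): `a_z^t b = a_z b + t f_z(a,b)`. -/
def defY (Y : V → V → ℤ → V) (f : V → V → ℤ → V) : V × V → V × V → ℤ → V × V :=
  fun p q n => (Y p.1 q.1 n, Y p.1 q.2 n + Y p.2 q.1 n + f p.1 q.1 n)

end Defs


/-!
The deformed product on `V[t]/(t²) = V × V` is
`(a, u)_z (b, v) = (a_z b, a_z v + u_z b + f_z(a, b))`. Each vertex algebra axiom for it
splits into its constant part, which is the axiom for `V`, and its `t`-part. Using linearity and
the axioms of `V`, the `t`-part of an axiom at arbitrary arguments `(a, u), (b, v), …` reduces to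
the corresponding condition on `f` at `a, b, …`. For associativity both sides are compared
modulo the double series killed by a power of `z + w`; these form an additive subgroup, so the
contributions of `u, v, w`, which are instances of associativity in `V`, drop out.
-/

section Series

variable {M N : Type*} [AddCommGroup M] [AddCommGroup N]

def IsLaurent (w : ℤ → M) : Prop := ∃ N : ℤ, ∀ n < N, w n = 0

lemma IsLaurent.add {g h : ℤ → M} (hg : IsLaurent g) (hh : IsLaurent h) : IsLaurent (g + h) := by
  obtain ⟨N₁, hN₁⟩ := hg
  obtain ⟨N₂, hN₂⟩ := hh
  exact ⟨min N₁ N₂, fun n hn => by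
    simp [hN₁ n (lt_min_iff.mp hn).1, hN₂ n (lt_min_iff.mp hn).2]⟩

lemma IsLaurent.negz {w : ℤ → M} (hw : IsLaurent w) : IsLaurent (negz w) := by
  obtain ⟨N, hN⟩ := hw
  exact ⟨N, fun n hn => by simp [VertexCohomology.negz, hN n hn]⟩

lemma IsLaurent.prodMk {g : ℤ → M} {h : ℤ → N} (hg : IsLaurent g) (hh : IsLaurent h) :
    IsLaurent fun n => (g n, h n) := by
  obtain ⟨N₁, hN₁⟩ := hg
  obtain ⟨N₂, hN₂⟩ := hh
  exact ⟨min N₁ N₂, fun n hn => by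
    simp [hN₁ n (lt_min_iff.mp hn).1, hN₂ n (lt_min_iff.mp hn).2]⟩

lemma isLaurent_unitSeries (a : M) : IsLaurent (unitSeries a) :=
  ⟨0, fun _ hn => if_neg hn.ne⟩

lemma unitSeries_prodMk (a : M) (b : N) :
    unitSeries (a, b) = fun n => (unitSeries a n, unitSeries b n) := by
  funext n
  ext <;> by_cases hn : n = 0 <;> simp [unitSeries, hn]

lemma negz_prodMk (g : ℤ → M) (h : ℤ → N) :
    negz (fun n => (g n, h n)) = fun n => (negz g n, negz h n) := rfl

lemma negz_add (g h : ℤ → M) : negz (g + h) = negz g + negz h := by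
  funext n
  simp [negz]

lemma IsLaurent.hasFiniteSupport_shift {w : ℤ → M} (hw : IsLaurent w) {P : Type*} [Zero P]
    (c : ℕ → M → P) (hc : ∀ k, c k 0 = 0) (n : ℤ) :
    Function.HasFiniteSupport fun k : ℕ => c k (w (n - k)) := by
  obtain ⟨N, hN⟩ := hw
  refine (Set.finite_Iio (n - N + 1).toNat).subset fun k hk => ?_
  by_contra hlt
  exact hk (show c k (w (n - k)) = 0 by rw [hN _ (by simp at hlt; omega), hc])

end Series

section Ezd

variable {𝕜 : Type*} [Field 𝕜] {M N : Type*} [AddCommGroup M] [Module 𝕜 M]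
  [AddCommGroup N] [Module 𝕜 N]

lemma ezd_add (d : M →ₗ[𝕜] M) {g h : ℤ → M} (hg : IsLaurent g) (hh : IsLaurent h) :
    ezd 𝕜 d (g + h) = ezd 𝕜 d g + ezd 𝕜 d h := by
  funext n
  have hfin {w : ℤ → M} (hw : IsLaurent w) :=
    hw.hasFiniteSupport_shift (fun k x => ((k.factorial : 𝕜)⁻¹) • (d ^ k) x) (by simp) n
  simp only [ezd, Pi.add_apply, map_add, smul_add]
  exact finsum_add_distrib (hfin hg) (hfin hh)

lemma map_ezd (φ : M →ₗ[𝕜] N) {d : M →ₗ[𝕜] M} {d' : N →ₗ[𝕜] N} (h : d'.comp φ = φ.comp d)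
    {w : ℤ → M} (hw : IsLaurent w) (n : ℤ) :
    φ (ezd 𝕜 d w n) = ezd 𝕜 d' (fun k => φ (w k)) n := by
  rw [ezd, map_finsum φ
    (hw.hasFiniteSupport_shift (fun k x => ((k.factorial : 𝕜)⁻¹) • (d ^ k) x) (by simp) n)]
  refine finsum_congr fun k => ?_
  rw [map_smul, ← LinearMap.comp_apply φ, ← Module.End.commute_pow_left_of_commute h,
    LinearMap.comp_apply]

lemma ezd_prodMap (d : M →ₗ[𝕜] M) (d' : N →ₗ[𝕜] N) {w : ℤ → M × N} (hw : IsLaurent w) :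
    ezd 𝕜 (d.prodMap d') w =
      fun n => (ezd 𝕜 d (fun k => (w k).1) n, ezd 𝕜 d' (fun k => (w k).2) n) := by
  funext n
  ext
  · exact map_ezd (LinearMap.fst 𝕜 M N) (LinearMap.ext fun _ => rfl) hw n
  · exact map_ezd (LinearMap.snd 𝕜 M N) (LinearMap.ext fun _ => rfl) hw n

end Ezd

section ShiftComp

variable {V W M N : Type*} [AddCommGroup W] [AddCommGroup M] [AddCommGroup N]

lemma shiftComp_hasFiniteSupport {F : V → W → ℤ → M} {a : V} (hF : ∀ j, F a 0 j = 0)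
    {u : ℤ → W} (hu : IsLaurent u) (m n : ℤ) :
    Function.HasFiniteSupport fun i : ℕ =>
      Ring.choose (m + (i : ℤ)) i • F a (u (n - i)) (m + i) :=
  hu.hasFiniteSupport_shift (fun i x => Ring.choose (m + (i : ℤ)) i • F a x (m + i))
    (by simp [hF]) n

lemma map_shiftComp (φ : M →+ N) {F : V → W → ℤ → M} {a : V} (hF : ∀ j, F a 0 j = 0)
    {u : ℤ → W} (hu : IsLaurent u) (m n : ℤ) :
    φ (shiftComp F a u m n) = shiftComp (fun a x j => φ (F a x j)) a u m n := by
  rw [shiftComp, map_finsum φ (shiftComp_hasFiniteSupport hF hu m n)]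
  exact finsum_congr fun i => map_zsmul φ _ _

lemma shiftComp_add_left {F G : V → W → ℤ → M} {a : V} (hF : ∀ j, F a 0 j = 0)
    (hG : ∀ j, G a 0 j = 0) {u : ℤ → W} (hu : IsLaurent u) (m n : ℤ) :
    shiftComp (F + G) a u m n = shiftComp F a u m n + shiftComp G a u m n := by
  simp only [shiftComp, Pi.add_apply, smul_add]
  exact finsum_add_distrib (shiftComp_hasFiniteSupport hF hu m n)
    (shiftComp_hasFiniteSupport hG hu m n)

lemma shiftComp_add_right {F : V → W → ℤ → M} {a : V}
    (hF : ∀ j x y, F a (x + y) j = F a x j + F a y j)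
    {u v : ℤ → W} (hu : IsLaurent u) (hv : IsLaurent v) (m n : ℤ) :
    shiftComp F a (u + v) m n = shiftComp F a u m n + shiftComp F a v m n := by
  have hF₀ (j : ℤ) : F a 0 j = 0 := by simpa using hF j 0 0
  simp only [shiftComp, Pi.add_apply, hF, smul_add]
  exact finsum_add_distrib (shiftComp_hasFiniteSupport hF₀ hu m n)
    (shiftComp_hasFiniteSupport hF₀ hv m n)

end ShiftComp

section MulZW

variable {M N : Type*} [AddCommGroup M] [AddCommGroup N]

lemma map_mulZW (φ : M →+ N) (l : ℕ) (F : ℤ → ℤ → M) (m n : ℤ) :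
    φ (mulZW l F m n) = mulZW l (fun m n => φ (F m n)) m n := by
  simp [mulZW, map_sum]

lemma mulZW_add (l : ℕ) (F G : ℤ → ℤ → M) : mulZW l (F + G) = mulZW l F + mulZW l G := by
  funext m n
  simp [mulZW, Finset.sum_add_distrib]

lemma mulZW_neg (l : ℕ) (F : ℤ → ℤ → M) : mulZW l (-F) = -mulZW l F := by
  funext m n
  simp [mulZW]

lemma mulZW_sub (l : ℕ) (F G : ℤ → ℤ → M) : mulZW l (F - G) = mulZW l F - mulZW l G := by
  rw [sub_eq_add_neg, mulZW_add, mulZW_neg, ← sub_eq_add_neg]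

lemma mulZW_eq_sum_antidiagonal (l : ℕ) (F : ℤ → ℤ → M) (m n : ℤ) :
    mulZW l F m n =
      ∑ ij ∈ Finset.HasAntidiagonal.antidiagonal l, l.choose ij.1 • F (m - ij.2) (n - ij.1) := by
  rw [Finset.Nat.sum_antidiagonal_eq_sum_range_succ (fun i j => l.choose i • F (m - j) (n - i))]
  simp [mulZW, natCast_zsmul]

lemma mulZW_succ (l : ℕ) (F : ℤ → ℤ → M) (m n : ℤ) :
    mulZW (l + 1) F m n = mulZW l F (m - 1) n + mulZW l F m (n - 1) := by
  simp only [mulZW_eq_sum_antidiagonal]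
  rw [Finset.sum_antidiagonal_choose_succ_nsmul (fun i j => F (m - j) (n - i))]
  congr 1
  · refine Finset.sum_congr rfl fun ij _ => ?_
    congr 2; push_cast; ring
  · refine Finset.sum_congr rfl fun ij hij => ?_
    rw [Nat.choose_symm_of_eq_add (Finset.HasAntidiagonal.mem_antidiagonal.mp hij).symm]
    congr 2; push_cast; ring

lemma mulZW_eq_zero_of_le {l l' : ℕ} {F : ℤ → ℤ → M} (h : mulZW l F = 0) (hle : l ≤ l') :
    mulZW l' F = 0 := by
  induction l', hle using Nat.le_induction with
  | base => exact h
  | succ k _ ih =>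
    funext m n
    rw [mulZW_succ, ih]
    simp

variable (M) in
def zwTorsion : AddSubgroup (ℤ → ℤ → M) where
  carrier := {F | ∃ l, mulZW l F = 0}
  zero_mem' := ⟨0, by funext m n; simp [mulZW]⟩
  add_mem' := by
    rintro F G ⟨l, hl⟩ ⟨l', hl'⟩
    refine ⟨max l l', ?_⟩
    rw [mulZW_add, mulZW_eq_zero_of_le hl (le_max_left _ _),
      mulZW_eq_zero_of_le hl' (le_max_right _ _), add_zero]
  neg_mem' := by
    rintro F ⟨l, hl⟩
    exact ⟨l, by rw [mulZW_neg, hl, neg_zero]⟩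

lemma mem_zwTorsion {F : ℤ → ℤ → M} : F ∈ zwTorsion M ↔ ∃ l, mulZW l F = 0 := Iff.rfl

lemma exists_mulZW_eq_iff_sub_mem (F G : ℤ → ℤ → M) :
    (∃ l, mulZW l F = mulZW l G) ↔ F - G ∈ zwTorsion M := by
  simp only [mem_zwTorsion, mulZW_sub, sub_eq_zero]

lemma mem_zwTorsion_prod_iff (H : ℤ → ℤ → M × N) :
    H ∈ zwTorsion (M × N) ↔
      (fun m n => (H m n).1) ∈ zwTorsion M ∧ (fun m n => (H m n).2) ∈ zwTorsion N := by
  have hfst (l : ℕ) : mulZW l (fun m n => (H m n).1) = fun m n => (mulZW l H m n).1 := by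
    funext m n; exact (map_mulZW (AddMonoidHom.fst M N) l H m n).symm
  have hsnd (l : ℕ) : mulZW l (fun m n => (H m n).2) = fun m n => (mulZW l H m n).2 := by
    funext m n; exact (map_mulZW (AddMonoidHom.snd M N) l H m n).symm
  constructor
  · rintro ⟨l, hl⟩
    exact ⟨⟨l, by rw [hfst, hl]; rfl⟩, ⟨l, by rw [hsnd, hl]; rfl⟩⟩
  · rintro ⟨⟨l, hl⟩, ⟨l', hl'⟩⟩
    refine ⟨max l l', ?_⟩
    funext m n
    refine Prod.ext ?_ ?_
    · simpa [hfst] using congrFun₂ (mulZW_eq_zero_of_le hl (le_max_left l l')) m n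
    · simpa [hsnd] using congrFun₂ (mulZW_eq_zero_of_le hl' (le_max_right l l')) m n

end MulZW

section Deformation

variable {𝕜 : Type*} [Field 𝕜] {V : Type*} [AddCommGroup V] [Module 𝕜 V]
  {Y : V → V → ℤ → V} {one : V} {D : V →ₗ[𝕜] V} (f : V → V → ℤ → V)

lemma defY_unit_left_iff (hV : IsVertexAlg 𝕜 Y one D) (p : V × V) :
    defY Y f (one, 0) p = unitSeries p ↔ ∀ n, f one p.1 n = 0 := by
  obtain ⟨a, u⟩ := p
  have hY₀ (n : ℤ) : Y 0 a n = 0 := (hV.linear_left a n).map_zero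
  simp [funext_iff, defY, unitSeries_prodMk, hV.unit_left, hY₀]

lemma defY_unit_right_iff (hV : IsVertexAlg 𝕜 Y one D) (p : V × V) :
    defY Y f p (one, 0) = ezd 𝕜 (D.prodMap D) (unitSeries p) ↔ ∀ n, f p.1 one n = 0 := by
  obtain ⟨a, u⟩ := p
  have hY₀ (n : ℤ) : Y a 0 n = 0 := (hV.linear_right a n).map_zero
  rw [ezd_prodMap D D (isLaurent_unitSeries _)]
  simp [funext_iff, defY, unitSeries_prodMk, hV.unit_right, hY₀]

lemma defY_transl_iff (hV : IsVertexAlg 𝕜 Y one D) (p q : V × V) :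
    defY Y f (D.prodMap D p) q = derivz (defY Y f p q) ↔ derivz (f p.1 q.1) = f (D p.1) q.1 := by
  simp [funext_iff, defY, derivz, hV.transl, smul_add, eq_comm]

lemma defY_derivation_iff (hV : IsVertexAlg 𝕜 Y one D) (p q : V × V) (n : ℤ) :
    D.prodMap D (defY Y f p q n) = defY Y f (D.prodMap D p) q n + defY Y f p (D.prodMap D q) n ↔
      D (f p.1 q.1 n) = f (D p.1) q.1 n + f p.1 (D q.1) n := by
  simp only [defY, LinearMap.prodMap_apply, Prod.mk_add_mk, map_add, hV.derivation, Prod.mk.injEq,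
    true_and]
  constructor <;> intro h <;> linear_combination (norm := module) h

lemma defY_comm_iff (hV : IsVertexAlg 𝕜 Y one D) (hf : ∀ a b, IsLaurent (f a b)) (p q : V × V) :
    defY Y f p q = ezd 𝕜 (D.prodMap D) (negz (defY Y f q p)) ↔
      f p.1 q.1 = ezd 𝕜 D (negz (f q.1 p.1)) := by
  obtain ⟨a, u⟩ := p
  obtain ⟨b, v⟩ := q
  have hdefY : defY Y f (b, v) (a, u) = fun n => (Y b a n, (Y b u + Y v a + f b a) n) := rfl
  have hL (x y : V) : IsLaurent (Y x y) := hV.trunc x y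
  have hsnd : ezd 𝕜 D (negz (Y b u + Y v a + f b a)) = Y u b + Y a v + ezd 𝕜 D (negz (f b a)) := by
    rw [negz_add, negz_add, ezd_add D ((hL b u).negz.add (hL v a).negz) (hf b a).negz,
      ezd_add D (hL b u).negz (hL v a).negz, ← hV.comm, ← hV.comm]
  rw [hdefY, negz_prodMk,
    ezd_prodMap D D ((hL b a).negz.prodMk ((hL b u).add (hL v a) |>.add (hf b a)).negz), hsnd]
  simp only [funext_iff, defY, ← hV.comm a b, Pi.add_apply, Prod.mk.injEq, true_and,
    add_comm (Y u b _), add_right_inj]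

lemma rAct_self (hV : IsVertexAlg 𝕜 Y one D) (a b : V) : rAct 𝕜 Y D a b = Y a b :=
  (hV.comm a b).symm

lemma shiftComp_defY (hV : IsVertexAlg 𝕜 Y one D) (hf₀ : ∀ a j, f a 0 j = 0) (p : V × V)
    {u : ℤ → V × V} (hu : IsLaurent u) (m n : ℤ) :
    shiftComp (defY Y f) p u m n =
      (shiftComp Y p.1 (fun k => (u k).1) m n,
        shiftComp Y p.1 (fun k => (u k).2) m n + shiftComp Y p.2 (fun k => (u k).1) m n
          + shiftComp f p.1 (fun k => (u k).1) m n) := by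
  have hY₀ (a : V) (j : ℤ) : Y a 0 j = 0 := (hV.linear_right a j).map_zero
  have hdefY₀ (j : ℤ) : defY Y f p 0 j = 0 := by simp [defY, hY₀, hf₀]
  ext
  · exact map_shiftComp (AddMonoidHom.fst V V) hdefY₀ hu m n
  · rw [← AddMonoidHom.coe_snd, map_shiftComp (AddMonoidHom.snd V V) hdefY₀ hu m n]
    change shiftComp ((fun p x j => Y p.1 x.2 j) + (fun p x j => Y p.2 x.1 j)
      + fun p x j => f p.1 x.1 j) p u m n = _
    rw [shiftComp_add_left (by simp [hY₀]) (by simp [hf₀]) hu,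
      shiftComp_add_left (by simp [hY₀]) (by simp [hY₀]) hu]
    rfl

lemma defY_defY_snd (hV : IsVertexAlg 𝕜 Y one D) (a u b v c w : V) (m n : ℤ) :
    (defY Y f (defY Y f (a, u) (b, v) m) (c, w) n).2
      = Y (Y a b m) w n + Y (Y a v m) c n + Y (Y u b m) c n + rAct 𝕜 Y D (f a b m) c n
        + f (Y a b m) c n := by
  have hY_add (x y : V) : Y (x + y) c n = Y x c n + Y y c n := (hV.linear_left c n).map_add x y
  simp only [defY, hY_add, rAct_self hV, add_assoc]

lemma isLaurent_defY (hV : IsVertexAlg 𝕜 Y one D) (hf : ∀ a b, IsLaurent (f a b)) (p q : V × V) :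
    IsLaurent (defY Y f p q) := by
  have hL (x y : V) : IsLaurent (Y x y) := hV.trunc x y
  exact (hL p.1 q.1).prodMk ((hL p.1 q.2).add (hL p.2 q.1) |>.add (hf p.1 q.1))

lemma shiftComp_defY_defY_snd (hV : IsVertexAlg 𝕜 Y one D) (hf₀ : ∀ a j, f a 0 j = 0)
    (hf : ∀ a b, IsLaurent (f a b)) (a u b v c w : V) (m n : ℤ) :
    (shiftComp (defY Y f) (a, u) (defY Y f (b, v) (c, w)) m n).2
      = shiftComp Y a (Y b w) m n + shiftComp Y a (Y v c) m n + shiftComp Y a (f b c) m n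
        + shiftComp Y u (Y b c) m n + shiftComp f a (Y b c) m n := by
  have hL (x y : V) : IsLaurent (Y x y) := hV.trunc x y
  have hY_add (j : ℤ) (x y : V) : Y a (x + y) j = Y a x j + Y a y j :=
    (hV.linear_right a j).map_add x y
  rw [shiftComp_defY f hV hf₀ _ (isLaurent_defY f hV hf _ _)]
  change shiftComp Y a (Y b w + Y v c + f b c) m n + shiftComp Y u (Y b c) m n
    + shiftComp f a (Y b c) m n = _
  rw [shiftComp_add_right hY_add ((hL b w).add (hL v c)) (hf b c),
    shiftComp_add_right hY_add (hL b w) (hL v c)]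

lemma defY_assoc_iff (hV : IsVertexAlg 𝕜 Y one D) (hf₀ : ∀ a j, f a 0 j = 0)
    (hf : ∀ a b, IsLaurent (f a b)) (p q r : V × V) :
    (∃ l, mulZW l (fun m n => defY Y f (defY Y f p q m) r n)
        = mulZW l (shiftComp (defY Y f) p (defY Y f q r))) ↔
      ∃ l, mulZW l (fun m n => f (Y p.1 q.1 m) r.1 n + rAct 𝕜 Y D (f p.1 q.1 m) r.1 n)
        = mulZW l
          (fun m n => shiftComp Y p.1 (f q.1 r.1) m n + shiftComp f p.1 (Y q.1 r.1) m n) := by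
  obtain ⟨a, u⟩ := p
  obtain ⟨b, v⟩ := q
  obtain ⟨c, w⟩ := r
  have hassoc (x y z : V) : (fun m n => Y (Y x y m) z n) - shiftComp Y x (Y y z) ∈ zwTorsion V :=
    (exists_mulZW_eq_iff_sub_mem _ _).mp (hV.assoc x y z)
  rw [exists_mulZW_eq_iff_sub_mem, exists_mulZW_eq_iff_sub_mem, mem_zwTorsion_prod_iff]
  set F : ℤ → ℤ → V × V := fun m n => defY Y f (defY Y f (a, u) (b, v) m) (c, w) n
  set G := shiftComp (defY Y f) (a, u) (defY Y f (b, v) (c, w))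
  have hfst :
      (fun m n => ((F - G) m n).1) = (fun m n => Y (Y a b m) c n) - shiftComp Y a (Y b c) := by
    funext m n
    simp only [F, G, Pi.sub_apply, Prod.fst_sub,
      shiftComp_defY f hV hf₀ _ (isLaurent_defY f hV hf _ _)]
    rfl
  have hsnd : (fun m n => ((F - G) m n).2)
      = ((fun m n => Y (Y a b m) w n) - shiftComp Y a (Y b w))
        + ((fun m n => Y (Y a v m) c n) - shiftComp Y a (Y v c))
        + ((fun m n => Y (Y u b m) c n) - shiftComp Y u (Y b c))
        + ((fun m n => f (Y a b m) c n + rAct 𝕜 Y D (f a b m) c n)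
          - fun m n => shiftComp Y a (f b c) m n + shiftComp f a (Y b c) m n) := by
    funext m n
    simp only [F, G, Pi.sub_apply, Pi.add_apply, Prod.snd_sub, defY_defY_snd f hV,
      shiftComp_defY_defY_snd f hV hf₀ hf]
    abel
  rw [hfst, hsnd, AddSubgroup.add_mem_cancel_left _
    (add_mem (add_mem (hassoc a b w) (hassoc a v c)) (hassoc u b c))]
  exact and_iff_right (hassoc a b c)

end Deformation

variable (𝕜 : Type*) [Field 𝕜] [CharZero 𝕜]
  {V : Type*} [AddCommGroup V] [Module 𝕜 V]
  (Y : V → V → ℤ → V) (one : V) (D : V →ₗ[𝕜] V)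

theorem deformation_iff_Z2
    (hV : IsVertexAlg 𝕜 Y one D) (f : V → V → ℤ → V)
    (hfr : ∀ (a : V) (n : ℤ), IsLinearMap 𝕜 (fun b => f a b n))
    (hft : ∀ a b, ∃ N : ℤ, ∀ n < N, f a b n = 0) :
    ((∀ p : V × V, defY Y f ((one, 0) : V × V) p = unitSeries p) ∧
      (∀ p : V × V, defY Y f p ((one, 0) : V × V) = ezd 𝕜 (D.prodMap D) (unitSeries p)) ∧
      (∀ p q : V × V, defY Y f (D.prodMap D p) q = derivz (defY Y f p q)) ∧
      (∀ (p q : V × V) (n : ℤ), D.prodMap D (defY Y f p q n)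
        = defY Y f (D.prodMap D p) q n + defY Y f p (D.prodMap D q) n) ∧
      (∀ p q : V × V, defY Y f p q = ezd 𝕜 (D.prodMap D) (negz (defY Y f q p))) ∧
      (∀ p q r : V × V, ∃ l : ℕ,
        mulZW l (fun m n => defY Y f (defY Y f p q m) r n)
          = mulZW l (shiftComp (defY Y f) p (defY Y f q r))))
    ↔ ((∀ a : V, (∀ n, f a one n = 0) ∧ (∀ n, f one a n = 0)) ∧
        (∀ a b : V, derivz (f a b) = f (D a) b) ∧
        (∀ (a b : V) (n : ℤ), D (f a b n) = f (D a) b n + f a (D b) n) ∧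
        (∀ a b : V, f a b = ezd 𝕜 D (negz (f b a))) ∧
        Cocycle 𝕜 Y Y D f) := by
  have unit_left := defY_unit_left_iff f hV
  have unit_right := defY_unit_right_iff f hV
  have transl := defY_transl_iff f hV
  have derivation := defY_derivation_iff f hV
  have comm := defY_comm_iff f hV hft
  have assoc := defY_assoc_iff f hV (fun a j => (hfr a j).map_zero) hft
  constructor
  · rintro ⟨h_unit_left, h_unit_right, h_transl, h_derivation, h_comm, h_assoc⟩
    exact ⟨fun a => ⟨(unit_right (a, 0)).1 (h_unit_right _), (unit_left (a, 0)).1 (h_unit_left _)⟩,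
      fun a b => (transl (a, 0) (b, 0)).1 (h_transl _ _),
      fun a b n => (derivation (a, 0) (b, 0) n).1 (h_derivation _ _ _),
      fun a b => (comm (a, 0) (b, 0)).1 (h_comm _ _),
      fun a b c => (assoc (a, 0) (b, 0) (c, 0)).1 (h_assoc _ _ _)⟩
  · rintro ⟨h_unit, h_transl, h_derivation, h_comm, h_cocycle⟩
    exact ⟨fun p => (unit_left p).2 (h_unit p.1).2, fun p => (unit_right p).2 (h_unit p.1).1,
      fun p q => (transl p q).2 (h_transl _ _),
      fun p q n => (derivation p q n).2 (h_derivation _ _ _),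
      fun p q => (comm p q).2 (h_comm _ _), fun p q r => (assoc p q r).2 (h_cocycle _ _ _)⟩

end VertexCohomology
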